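/- Let F have characteristic zero and let A be a ℤ₂-graded associative algebra. A multilinear ℤ₂-graded polynomial f is a graded polynomial identity of A if and only if f* is a graded polynomial identity of the Grassmann envelope G(A), where f* is obtained from f by multiplying each monomial by the sign of the permutation its odd variables induce. -/

import Mathlib

/-!
Substitute pure tensors `a i ⊗ g i` and `b j ⊗ h j`, with `g i` even and `h j` odd elements of
the Grassmann algebra. Even elements are central and odd ones pairwise anticommute, so a monomial
whose odd variables occur in the order `σ` evaluates to its value at `(a, b)` tensored with
`sgn σ · ∏ g ∏ h`. This sign cancels the one in `f*`, whence `f*(a ⊗ g, b ⊗ h) = f(a, b) ⊗ ∏ g ∏ h`.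
Since `f*` is multilinear and the graded components of `G(A)` are spanned by such pure tensors,
this proves one direction; for the other take `g i = 1` and `h j` distinct generators, whose
product is nonzero.
-/
open scoped TensorProduct

noncomputable section

variable (F : Type*) [Field F]

/-- Grassmann (exterior) algebra on generators indexed by `ι`. -/
abbrev Grass (ι : Type*) := ExteriorAlgebra F (ι →₀ F)

/-- The parity (ℤ₂) grading of the Grassmann algebra. -/
def grassPart (ι : Type*) (i : ZMod 2) : Submodule F (Grass F ι) :=
  CliffordAlgebra.evenOdd (0 : QuadraticForm F (ι →₀ F)) i

/-- The augmentation ideal of the Grassmann algebra: elements with zero constant term. -/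
def grassStar (ι : Type*) : Submodule F (Grass F ι) :=
  LinearMap.ker (ExteriorAlgebra.algebraMapInv (M := ι →₀ F)).toLinearMap

/-- The image of `p ⊗ q` inside `A ⊗[F] B`. -/
def tensSub {A B : Type*} [Ring A] [Ring B] [Algebra F A] [Algebra F B]
    (p : Submodule F A) (q : Submodule F B) : Submodule F (A ⊗[F] B) :=
  LinearMap.range (TensorProduct.map p.subtype q.subtype)

/-- The Grassmann envelope `A⁰ ⊗ G⁰ ⊕ A¹ ⊗ G¹` of a ℤ₂-graded algebra. -/
def grassEnv (A : Type*) [Ring A] [Algebra F A] (𝒜 : ZMod 2 → Submodule F A)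
    (ι : Type*) : Submodule F (A ⊗[F] Grass F ι) :=
  tensSub F (𝒜 0) (grassPart F ι 0) ⊔ tensSub F (𝒜 1) (grassPart F ι 1)

/-- The Grassmann envelope without constant terms `(G*)⁰ ⊗ A⁰ ⊕ (G*)¹ ⊗ A¹`. -/
def grassEnvStar (A : Type*) [Ring A] [Algebra F A] (𝒜 : ZMod 2 → Submodule F A)
    (ι : Type*) : Submodule F (A ⊗[F] Grass F ι) :=
  tensSub F (𝒜 0) (grassStar F ι ⊓ grassPart F ι 0) ⊔
    tensSub F (𝒜 1) (grassStar F ι ⊓ grassPart F ι 1)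


/-- Number of odd positions strictly before position `p` in the shape `S`. -/
def oddRank {N : ℕ} (S : Fin N → Bool) (p : Fin N) : ℕ :=
  (Finset.univ.filter fun q => q < p ∧ S q = true).card

/-- Number of even positions strictly before position `p` in the shape `S`. -/
def evenRank {N : ℕ} (S : Fin N → Bool) (p : Fin N) : ℕ :=
  (Finset.univ.filter fun q => q < p ∧ S q = false).card

/-- The multilinear graded monomial `w₀ z_{σ(1)} w₁ ⋯ w_{s-1} z_{σ(s)} w_s` determined by
a shape `S` (telling which positions hold odd variables), an ordering `α` of the even
variables (the word data `w`) and an ordering `σ` of the odd variables, evaluated at the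
even values `u` and odd values `v`. -/
def monEval {B : Type*} [Ring B] (r s : ℕ) (S : Fin (r + s) → Bool)
    (α : Equiv.Perm (Fin r)) (σ : Equiv.Perm (Fin s)) (u : Fin r → B) (v : Fin s → B) : B :=
  (List.ofFn fun p : Fin (r + s) =>
    if S p then (if h : oddRank S p < s then v (σ ⟨oddRank S p, h⟩) else 1)
    else (if h : evenRank S p < r then u (α ⟨evenRank S p, h⟩) else 1)).prod

/-- Evaluation of the multilinear ℤ₂-graded polynomial
`f = Σ_w Σ_σ λ_{w,σ} w₀ z_{σ(1)} w₁ ⋯ z_{σ(s)} w_s` with coefficients `c = λ`. -/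
def gmlEval {B : Type*} [Ring B] [Algebra F B] (r s : ℕ)
    (c : (Fin (r + s) → Bool) → Equiv.Perm (Fin r) → Equiv.Perm (Fin s) → F)
    (u : Fin r → B) (v : Fin s → B) : B :=
  ∑ S : Fin (r + s) → Bool, ∑ α : Equiv.Perm (Fin r), ∑ σ : Equiv.Perm (Fin s),
    c S α σ • monEval r s S α σ u v

/-- The coefficients of `f*`: each term of `f` is multiplied by `sgn σ`, the sign of the
permutation of the odd variables. -/
def starCoeff {r s : ℕ}
    (c : (Fin (r + s) → Bool) → Equiv.Perm (Fin r) → Equiv.Perm (Fin s) → F) :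
    (Fin (r + s) → Bool) → Equiv.Perm (Fin r) → Equiv.Perm (Fin s) → F :=
  fun S α σ => ((Equiv.Perm.sign σ : ℤ) : F) * c S α σ

namespace ExteriorAlgebra

open CliffordAlgebra

variable {R M : Type*} [CommRing R] [AddCommGroup M] [Module R M]

theorem ι_mul_ι_anticomm (a b : M) : ι R a * ι R b = -(ι R b * ι R a) :=
  CliffordAlgebra.ι_mul_ι_comm_of_isOrtho (.all a b)

theorem commute_ι_mul_ι (a b : M) (z : ExteriorAlgebra R M) : Commute (ι R a * ι R b) z := by
  induction z using CliffordAlgebra.induction with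
  | algebraMap r => exact Algebra.commute_algebraMap_right r _
  | ι m =>
    change ι R a * ι R b * ι R m = ι R m * (ι R a * ι R b)
    rw [mul_assoc, ι_mul_ι_anticomm b, mul_neg, ← mul_assoc, ι_mul_ι_anticomm a, neg_mul,
      neg_neg, mul_assoc]
  | mul x y hx hy => exact hx.mul_right hy
  | add x y hx hy => exact hx.add_right hy

theorem commute_of_mem_evenOdd_zero {x : ExteriorAlgebra R M} (hx : x ∈ evenOdd 0 0)
    (z : ExteriorAlgebra R M) : Commute x z := by
  induction x, hx using CliffordAlgebra.even_induction with
  | algebraMap r => exact Algebra.commute_algebraMap_left r z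
  | add x y _ _ ihx ihy => exact ihx.add_left ihy
  | ι_mul_ι_mul a b x _ ih => exact (commute_ι_mul_ι a b z).mul_left ih

theorem mul_ι_of_mem_evenOdd_one {x : ExteriorAlgebra R M} (hx : x ∈ evenOdd 0 1) (m : M) :
    x * ι R m = -(ι R m * x) := by
  induction x, hx using CliffordAlgebra.odd_induction with
  | ι a => exact ι_mul_ι_anticomm a m
  | add x y _ _ ihx ihy => rw [add_mul, ihx, ihy, mul_add, neg_add]
  | ι_mul_ι_mul a b x _ ih =>
    rw [mul_assoc, ih, mul_neg, ← mul_assoc, (commute_ι_mul_ι a b _).eq, mul_assoc]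

theorem mul_anticomm_of_mem_evenOdd_one {x y : ExteriorAlgebra R M} (hx : x ∈ evenOdd 0 1)
    (hy : y ∈ evenOdd 0 1) : x * y = -(y * x) := by
  induction y, hy using CliffordAlgebra.odd_induction with
  | ι m => exact mul_ι_of_mem_evenOdd_one hx m
  | add y z _ _ ihy ihz => rw [mul_add, ihy, ihz, add_mul, neg_add]
  | ι_mul_ι_mul a b y _ ih =>
    rw [← mul_assoc, ← (commute_ι_mul_ι a b x).eq, mul_assoc, ih, mul_neg, ← mul_assoc]

end ExteriorAlgebra

section AnticommutingProducts

variable {B : Type*} [Ring B]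

theorem List.prod_ofFn_comp_swap_castSucc_succ {n : ℕ} (w : Fin (n + 1) → B) (i : Fin n)
    (h : w i.castSucc * w i.succ = -(w i.succ * w i.castSucc)) :
    (List.ofFn (w ∘ Equiv.swap i.castSucc i.succ)).prod = -(List.ofFn w).prod := by
  induction n with
  | zero => exact i.elim0
  | succ n ih =>
    induction i using Fin.cases with
    | zero =>
      simp only [List.ofFn_succ, List.prod_cons, Function.comp_apply]
      simp only [Fin.castSucc_zero, Fin.succ_zero_eq_one, Equiv.swap_apply_left,
        Equiv.swap_apply_right] at h ⊢
      have hfix (k : Fin n) : Equiv.swap (0 : Fin (n + 2)) 1 k.succ.succ = k.succ.succ :=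
        Equiv.swap_apply_of_ne_of_ne (Fin.succ_ne_zero _) (Fin.succ_succ_ne_one k)
      simp only [hfix]
      rw [← mul_assoc, ← mul_assoc, h, neg_mul, neg_neg]
    | succ i =>
      have hhead : Equiv.swap i.succ.castSucc i.succ.succ 0 = 0 :=
        Equiv.swap_apply_of_ne_of_ne (by simp [Fin.ext_iff]) (Fin.succ_ne_zero _).symm
      have htail : (w ∘ Equiv.swap i.succ.castSucc i.succ.succ) ∘ Fin.succ =
          (w ∘ Fin.succ) ∘ Equiv.swap i.castSucc i.succ := by
        ext k
        simp only [Function.comp_apply, ← Fin.succ_castSucc, (Fin.succ_injective _).swap_apply]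
      rw [List.ofFn_succ, List.prod_cons, Function.comp_apply, hhead]
      change w 0 * (List.ofFn ((w ∘ _) ∘ Fin.succ)).prod = _
      rw [htail, ih _ i h, List.ofFn_succ (f := w), List.prod_cons, mul_neg]
      rfl

theorem List.prod_ofFn_comp_perm_of_anticomm {n : ℕ} (w : Fin n → B)
    (hw : _root_.Pairwise fun i j => w i * w j = -(w j * w i)) (σ : Equiv.Perm (Fin n)) :
    (List.ofFn (w ∘ σ)).prod = (Equiv.Perm.sign σ : ℤ) • (List.ofFn w).prod := by
  cases n with
  | zero => simp [Subsingleton.elim σ 1]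
  | succ n =>
    induction σ using Submonoid.induction_of_closure_eq_top_right
      (Equiv.Perm.mclosure_swap_castSucc_succ n) with
    | one => simp
    | mul_right σ τ hτ ih =>
      obtain ⟨i, rfl⟩ := hτ
      have hne : i.castSucc ≠ i.succ := Fin.castSucc_lt_succ.ne
      rw [Equiv.Perm.coe_mul, ← Function.comp_assoc,
        List.prod_ofFn_comp_swap_castSucc_succ (w ∘ σ) i (hw (σ.injective.ne hne)), ih,
        Equiv.Perm.sign_mul, Equiv.Perm.sign_swap hne]
      simp

end AnticommutingProducts

theorem MultilinearMap.map_eq_zero_of_forall_mem_span {R ι N : Type*} {M : ι → Type*}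
    [CommSemiring R] [Fintype ι] [∀ i, AddCommMonoid (M i)] [∀ i, Module R (M i)]
    [AddCommMonoid N] [Module R N] (f : MultilinearMap R M N) {T : ∀ i, Set (M i)}
    (hf : ∀ x : ∀ i, M i, (∀ i, x i ∈ T i) → f x = 0) {x : ∀ i, M i}
    (hx : ∀ i, x i ∈ Submodule.span R (T i)) : f x = 0 := by
  classical
  choose n c v hv using fun i => Submodule.mem_span_set'.mp (hx i)
  obtain rfl : x = fun i => ∑ k, c i k • (v i k : M i) := funext fun i => (hv i).symm
  rw [f.map_sum]
  refine Finset.sum_eq_zero fun r _ => ?_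
  rw [f.map_smul_univ, hf _ fun i => (v i (r i)).2, smul_zero]

theorem TensorProduct.eq_zero_of_tmul_eq_zero_left {K V W : Type*} [Field K] [AddCommGroup V]
    [Module K V] [AddCommGroup W] [Module K W] {v : V} {w : W} (h : v ⊗ₜ[K] w = 0)
    (hw : w ≠ 0) : v = 0 := by
  obtain ⟨φ, hφ⟩ := Module.Projective.exists_dual_ne_zero K hw
  have h' := congrArg ((TensorProduct.rid K V).toLinearMap ∘ₗ φ.lTensor V) h
  simp only [LinearMap.comp_apply, LinearMap.lTensor_tmul, LinearEquiv.coe_coe,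
    TensorProduct.rid_tmul, map_zero] at h'
  exact (smul_eq_zero.mp h').resolve_left hφ

theorem List.prod_ofFn_tmul {R A G : Type*} [CommSemiring R] [Semiring A] [Semiring G]
    [Algebra R A] [Algebra R G] {n : ℕ} (f : Fin n → A) (g : Fin n → G) :
    (List.ofFn fun p => f p ⊗ₜ[R] g p).prod = (List.ofFn f).prod ⊗ₜ[R] (List.ofFn g).prod := by
  induction n with
  | zero => simp [Algebra.TensorProduct.one_def]
  | succ n ih =>
    simp only [List.ofFn_succ, List.prod_cons, ih, Algebra.TensorProduct.tmul_mul_tmul]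

section TensSub

variable {A G : Type*} [Ring A] [Ring G] [Algebra F A] [Algebra F G]

theorem tmul_mem_tensSub {p : Submodule F A} {q : Submodule F G} {a : A} {g : G} (ha : a ∈ p)
    (hg : g ∈ q) : a ⊗ₜ[F] g ∈ tensSub F p q :=
  ⟨⟨a, ha⟩ ⊗ₜ ⟨g, hg⟩, rfl⟩

theorem tensSub_eq_span (p : Submodule F A) (q : Submodule F G) :
    tensSub F p q = Submodule.span F (Set.image2 (· ⊗ₜ[F] ·) p q) := by
  rw [tensSub, TensorProduct.range_map_eq_span_tmul]
  congr 1
  ext t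
  simp [Set.mem_image2]

end TensSub

section Shapes

variable {N : ℕ}

def shapeRank (S : Fin N → Bool) (b : Bool) (p : Fin N) : ℕ :=
  (Finset.univ.filter fun q => q < p ∧ S q = b).card

def shapeCount (S : Fin N → Bool) (b : Bool) : ℕ :=
  (Finset.univ.filter fun q => S q = b).card

theorem oddRank_eq_shapeRank (S : Fin N → Bool) : oddRank S = shapeRank S true := rfl

theorem evenRank_eq_shapeRank (S : Fin N → Bool) : evenRank S = shapeRank S false := rfl

theorem shapeRank_castSucc (S : Fin (N + 1) → Bool) (b : Bool) (p : Fin N) :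
    shapeRank S b p.castSucc = shapeRank (S ∘ Fin.castSucc) b p := by
  rw [shapeRank, shapeRank, Finset.card_filter, Finset.card_filter, Fin.sum_univ_castSucc]
  simp [(Fin.castSucc_lt_last p).not_gt]

theorem shapeRank_last (S : Fin (N + 1) → Bool) (b : Bool) :
    shapeRank S b (Fin.last N) = shapeCount (S ∘ Fin.castSucc) b := by
  rw [shapeRank, shapeCount, Finset.card_filter, Finset.card_filter, Fin.sum_univ_castSucc]
  simp [Fin.castSucc_lt_last]

theorem shapeCount_succ (S : Fin (N + 1) → Bool) (b : Bool) :
    shapeCount S b = shapeCount (S ∘ Fin.castSucc) b + if S (Fin.last N) = b then 1 else 0 := by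
  rw [shapeCount, shapeCount, Finset.card_filter, Finset.card_filter, Fin.sum_univ_castSucc]
  rfl

theorem shapeCount_true_add_false (S : Fin N → Bool) :
    shapeCount S true + shapeCount S false = N := by
  simpa [shapeCount] using
    Finset.card_filter_add_card_filter_not (s := Finset.univ) (fun q => S q = true)

theorem shapeRank_lt_shapeCount {S : Fin N → Bool} {b : Bool} {p : Fin N} (hp : S p = b) :
    shapeRank S b p < shapeCount S b :=
  Finset.card_lt_card <| (Finset.ssubset_iff_of_subset fun q hq => by
    simp only [Finset.mem_filter] at hq ⊢
    exact ⟨hq.1, hq.2.2⟩).mpr ⟨p, by simp [hp], by simp⟩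

theorem shapeRank_lt_shapeRank {S : Fin N → Bool} {b : Bool} {p p' : Fin N} (h : p < p')
    (hp : S p = b) : shapeRank S b p < shapeRank S b p' :=
  Finset.card_lt_card <| (Finset.ssubset_iff_of_subset fun q hq => by
    simp only [Finset.mem_filter] at hq ⊢
    exact ⟨hq.1, hq.2.1.trans h, hq.2.2⟩).mpr ⟨p, by simp [hp, h], by simp⟩

theorem eq_of_shapeRank_eq {S : Fin N → Bool} {b : Bool} {p p' : Fin N} (hp : S p = b)
    (hp' : S p' = b) (h : shapeRank S b p = shapeRank S b p') : p = p' := by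
  rcases lt_trichotomy p p' with hlt | heq | hgt
  · exact absurd h (shapeRank_lt_shapeRank hlt hp).ne
  · exact heq
  · exact absurd h (shapeRank_lt_shapeRank hgt hp').ne'

theorem prod_ofFn_shape_eq {B : Type*} [Monoid B] (S : Fin N → Bool) (g h : ℕ → B)
    (hgh : ∀ i j, Commute (g i) (h j)) :
    (List.ofFn fun p => if S p then h (shapeRank S true p) else g (shapeRank S false p)).prod =
      ((List.range (shapeCount S false)).map g).prod *
        ((List.range (shapeCount S true)).map h).prod := by
  induction N with
  | zero => simp [shapeCount]
  | succ N ih =>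
    rw [List.ofFn_succ', List.prod_concat]
    simp only [shapeRank_castSucc, shapeRank_last, shapeCount_succ S]
    have ih' := ih (S ∘ Fin.castSucc)
    simp only [Function.comp_apply] at ih'
    rw [ih']
    cases S (Fin.last N) <;>
      simp only [Bool.false_eq_true, ↓reduceIte, List.range_succ, List.map_append,
        List.prod_append, List.map_cons, List.map_nil, List.prod_cons, List.prod_nil, mul_one,
        add_zero, Bool.true_eq_false, mul_assoc]
    refine congrArg _ (Commute.list_prod_right _ _ fun x hx => ?_).eq.symm
    obtain ⟨j, -, rfl⟩ := List.mem_map.mp hx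
    exact hgh _ j

end Shapes

section Monomials

variable {r s : ℕ}

theorem shapeCount_false_eq {S : Fin (r + s) → Bool} (hS : shapeCount S true = s) :
    shapeCount S false = r := by
  have := shapeCount_true_add_false S
  omega

def shapeSlot (S : Fin (r + s) → Bool) (hS : shapeCount S true = s) (p : Fin (r + s)) :
    Fin r ⊕ Fin s :=
  if hp : S p then .inr ⟨shapeRank S true p, (shapeRank_lt_shapeCount hp).trans_eq hS⟩
  else .inl ⟨shapeRank S false p,
    (shapeRank_lt_shapeCount (Bool.eq_false_iff.mpr hp)).trans_eq (shapeCount_false_eq hS)⟩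

theorem shapeSlot_injective (S : Fin (r + s) → Bool) (hS : shapeCount S true = s) :
    Function.Injective (shapeSlot S hS) := by
  intro p p' h
  cases hp : S p <;> cases hp' : S p' <;> simp [shapeSlot, hp, hp'] at h
  all_goals exact eq_of_shapeRank_eq hp hp' h

def shapeEquiv (S : Fin (r + s) → Bool) (hS : shapeCount S true = s) :
    Fin (r + s) ≃ Fin r ⊕ Fin s :=
  Equiv.ofBijective (shapeSlot S hS) <| (Fintype.bijective_iff_injective_and_card _).mpr
    ⟨shapeSlot_injective S hS, by simp⟩

theorem monEval_eq_prod_shapeSlot {B : Type*} [Ring B] {S : Fin (r + s) → Bool}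
    (hS : shapeCount S true = s) (α : Equiv.Perm (Fin r)) (σ : Equiv.Perm (Fin s))
    (u : Fin r → B) (v : Fin s → B) :
    monEval r s S α σ u v =
      (List.ofFn fun p => Sum.elim u v (Sum.map α σ (shapeSlot S hS p))).prod := by
  unfold monEval shapeSlot
  congr 2
  funext p
  by_cases hp : S p
  · have hs := (shapeRank_lt_shapeCount hp).trans_eq hS
    simp [hp, oddRank_eq_shapeRank, hs]
  · rw [Bool.not_eq_true] at hp
    have hr := (shapeRank_lt_shapeCount hp).trans_eq (shapeCount_false_eq hS)
    simp [hp, evenRank_eq_shapeRank, hr]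

variable {B : Type*} [Ring B] [Algebra F B]

def monMap (S : Fin (r + s) → Bool) (hS : shapeCount S true = s) (α : Equiv.Perm (Fin r))
    (σ : Equiv.Perm (Fin s)) : MultilinearMap F (fun _ : Fin r ⊕ Fin s => B) B :=
  (MultilinearMap.mkPiAlgebraFin F (r + s) B).domDomCongr
    ((shapeEquiv S hS).trans (Equiv.sumCongr α σ))

theorem monMap_sumElim {S : Fin (r + s) → Bool} (hS : shapeCount S true = s)
    (α : Equiv.Perm (Fin r)) (σ : Equiv.Perm (Fin s)) (u : Fin r → B) (v : Fin s → B) :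
    monMap F S hS α σ (Sum.elim u v) = monEval r s S α σ u v := by
  rw [monEval_eq_prod_shapeSlot hS]
  rfl

def gmlMap (c : (Fin (r + s) → Bool) → Equiv.Perm (Fin r) → Equiv.Perm (Fin s) → F) :
    MultilinearMap F (fun _ : Fin r ⊕ Fin s => B) B :=
  ∑ S, ∑ α, ∑ σ, c S α σ • if hS : shapeCount S true = s then monMap F S hS α σ else 0

theorem gmlEval_eq_gmlMap {c : (Fin (r + s) → Bool) → Equiv.Perm (Fin r) → Equiv.Perm (Fin s) → F}
    (hc : ∀ S α σ, c S α σ ≠ 0 → shapeCount S true = s) (u : Fin r → B) (v : Fin s → B) :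
    gmlEval F r s c u v = gmlMap F c (Sum.elim u v) := by
  simp only [gmlEval, gmlMap, FunLike.coe_sum, Finset.sum_apply, smul_apply]
  refine Fintype.sum_congr _ _ fun S => Fintype.sum_congr _ _ fun α =>
    Fintype.sum_congr _ _ fun σ => ?_
  by_cases hcS : c S α σ = 0
  · simp [hcS]
  · rw [dif_pos (hc S α σ hcS), monMap_sumElim]

end Monomials

section Evaluation

variable {r s : ℕ}

theorem monEval_tmul {A G : Type*} [Ring A] [Ring G] [Algebra F A] [Algebra F G]
    (S : Fin (r + s) → Bool) (α : Equiv.Perm (Fin r)) (σ : Equiv.Perm (Fin s))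
    (a : Fin r → A) (b : Fin s → A) (g : Fin r → G) (h : Fin s → G) :
    monEval r s S α σ (fun i => a i ⊗ₜ[F] g i) (fun j => b j ⊗ₜ[F] h j) =
      monEval r s S α σ a b ⊗ₜ[F] monEval r s S α σ g h := by
  unfold monEval
  rw [← List.prod_ofFn_tmul]
  congr 2
  funext p
  split_ifs <;> simp [Algebra.TensorProduct.one_def]

theorem monEval_eq_sign_smul {G : Type*} [Ring G] {S : Fin (r + s) → Bool}
    (hS : shapeCount S true = s) (α : Equiv.Perm (Fin r)) (σ : Equiv.Perm (Fin s))
    {g : Fin r → G} {h : Fin s → G} (hg : ∀ i z, Commute (g i) z)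
    (hh : Pairwise fun i j => h i * h j = -(h j * h i)) :
    monEval r s S α σ g h =
      (Equiv.Perm.sign σ : ℤ) • ((List.ofFn g).prod * (List.ofFn h).prod) := by
  set g' : ℕ → G := fun k => if hk : k < r then g (α ⟨k, hk⟩) else 1
  set h' : ℕ → G := fun k => if hk : k < s then h (σ ⟨k, hk⟩) else 1
  have hg' : ∀ i j, Commute (g' i) (h' j) := fun i j => by
    by_cases hi : i < r
    · simp only [g', dif_pos hi, hg]
    · simp only [g', dif_neg hi, Commute.one_left]
  have hprod : ∀ {n} (f : Fin n → G) (f' : ℕ → G), (∀ k : Fin n, f' k = f k) →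
      ((List.range n).map f').prod = (List.ofFn f).prod := fun f f' hf => by
    rw [List.ofFn_eq_map, ← List.map_coe_finRange_eq_range, List.map_map]
    exact congrArg _ (List.map_congr_left fun k _ => hf k)
  calc monEval r s S α σ g h
      = ((List.range (shapeCount S false)).map g').prod *
          ((List.range (shapeCount S true)).map h').prod :=
        prod_ofFn_shape_eq S g' h' hg'
    _ = (List.ofFn (g ∘ α)).prod * (List.ofFn (h ∘ σ)).prod := by
        rw [shapeCount_false_eq hS, hS, hprod (g ∘ α) g' fun k => dif_pos k.isLt,
          hprod (h ∘ σ) h' fun k => dif_pos k.isLt]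
    _ = _ := by
        rw [List.prod_ofFn_comp_perm_of_anticomm h hh, mul_smul_comm,
          ((Equiv.Perm.ofFn_comp_perm α g).prod_eq' _)]
        exact List.pairwise_ofFn.mpr fun i j _ => hg _ _

end Evaluation

theorem gmlEval_starCoeff_tmul {r s : ℕ} {A G : Type*} [Ring A] [Ring G] [Algebra F A]
    [Algebra F G] {c : (Fin (r + s) → Bool) → Equiv.Perm (Fin r) → Equiv.Perm (Fin s) → F}
    (hc : ∀ S α σ, c S α σ ≠ 0 → shapeCount S true = s) (a : Fin r → A) (b : Fin s → A)
    {g : Fin r → G} {h : Fin s → G} (hg : ∀ i z, Commute (g i) z)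
    (hh : Pairwise fun i j => h i * h j = -(h j * h i)) :
    gmlEval F r s (starCoeff F c) (fun i => a i ⊗ₜ[F] g i) (fun j => b j ⊗ₜ[F] h j) =
      gmlEval F r s c a b ⊗ₜ[F] ((List.ofFn g).prod * (List.ofFn h).prod) := by
  simp only [gmlEval, TensorProduct.sum_tmul]
  refine Fintype.sum_congr _ _ fun S => Fintype.sum_congr _ _ fun α =>
    Fintype.sum_congr _ _ fun σ => ?_
  by_cases hcS : c S α σ = 0
  · simp [starCoeff, hcS]
  rw [monEval_tmul, monEval_eq_sign_smul (hc S α σ hcS) α σ hg hh, TensorProduct.tmul_smul,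
    starCoeff, ← Int.cast_smul_eq_zsmul F, smul_smul, ← TensorProduct.smul_tmul']
  congr 1
  rw [mul_comm, ← mul_assoc, ← Int.cast_mul, ← Units.val_mul, Int.units_mul_self, Units.val_one,
    Int.cast_one, one_mul]

theorem exists_grassPart_one_prod_ne_zero (s : ℕ) :
    ∃ h : Fin s → Grass F ℕ, (∀ j, h j ∈ grassPart F ℕ 1) ∧ (List.ofFn h).prod ≠ 0 := by
  have hli := exteriorPower.ιMulti_family_linearIndependent_field (n := s)
    (Finsupp.linearIndependent_single_one F ℕ)
  refine ⟨fun j => ExteriorAlgebra.ι F (Finsupp.single j 1), fun j =>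
    CliffordAlgebra.ι_mem_evenOdd_one _ _, ?_⟩
  have := hli.ne_zero (Set.powersetCard.ofFinEmbEquiv (Fin.valOrderEmb s))
  rwa [Ne, ← ZeroMemClass.coe_eq_zero, exteriorPower.ιMulti_family_apply_coe,
    ExteriorAlgebra.ιMulti_family, Equiv.symm_apply_apply, ExteriorAlgebra.ιMulti_apply] at this

section GrassmannEnvelope

variable {A : Type*} [Ring A] [Algebra F A] {𝒜 : ZMod 2 → Submodule F A} {r s : ℕ}
  {c : (Fin (r + s) → Bool) → Equiv.Perm (Fin r) → Equiv.Perm (Fin s) → F}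

theorem gmlEval_starCoeff_eq_zero (hc : ∀ S α σ, c S α σ ≠ 0 → shapeCount S true = s)
    (hA : ∀ (a : Fin r → A) (b : Fin s → A), (∀ i, a i ∈ 𝒜 0) → (∀ j, b j ∈ 𝒜 1) →
      gmlEval F r s c a b = 0)
    {x : Fin r → A ⊗[F] Grass F ℕ} {y : Fin s → A ⊗[F] Grass F ℕ}
    (hx : ∀ i, x i ∈ tensSub F (𝒜 0) (grassPart F ℕ 0))
    (hy : ∀ j, y j ∈ tensSub F (𝒜 1) (grassPart F ℕ 1)) :
    gmlEval F r s (starCoeff F c) x y = 0 := by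
  have hc' : ∀ S α σ, starCoeff F c S α σ ≠ 0 → shapeCount S true = s :=
    fun S α σ h => hc S α σ (right_ne_zero_of_mul h)
  rw [gmlEval_eq_gmlMap F hc']
  refine MultilinearMap.map_eq_zero_of_forall_mem_span _
    (T := Sum.elim (fun _ => Set.image2 (· ⊗ₜ[F] ·) (𝒜 0) (grassPart F ℕ 0))
      (fun _ => Set.image2 (· ⊗ₜ[F] ·) (𝒜 1) (grassPart F ℕ 1))) (fun z hz => ?_) ?_
  · choose a ha g hg hag using fun i => hz (.inl i)
    choose b hb h hh hbh using fun j => hz (.inr j)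
    have hz : z = Sum.elim (fun i => a i ⊗ₜ[F] g i) (fun j => b j ⊗ₜ[F] h j) := by
      ext (i | j) <;> simp [hag, hbh]
    rw [hz, ← gmlEval_eq_gmlMap F hc', gmlEval_starCoeff_tmul F hc a b
      (fun i => ExteriorAlgebra.commute_of_mem_evenOdd_zero (hg i))
      (fun i j _ => ExteriorAlgebra.mul_anticomm_of_mem_evenOdd_one (hh i) (hh j)),
      hA a b ha hb, TensorProduct.zero_tmul]
  · rintro (i | j)
    · simpa [tensSub_eq_span] using hx i
    · simpa [tensSub_eq_span] using hy j

theorem gmlEval_eq_zero_of_starCoeff (hc : ∀ S α σ, c S α σ ≠ 0 → shapeCount S true = s)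
    (hG : ∀ (x : Fin r → A ⊗[F] Grass F ℕ) (y : Fin s → A ⊗[F] Grass F ℕ),
      (∀ i, x i ∈ tensSub F (𝒜 0) (grassPart F ℕ 0)) →
      (∀ j, y j ∈ tensSub F (𝒜 1) (grassPart F ℕ 1)) → gmlEval F r s (starCoeff F c) x y = 0)
    {a : Fin r → A} {b : Fin s → A} (ha : ∀ i, a i ∈ 𝒜 0) (hb : ∀ j, b j ∈ 𝒜 1) :
    gmlEval F r s c a b = 0 := by
  obtain ⟨h, hh, hne⟩ := exists_grassPart_one_prod_ne_zero F s
  have h0 := hG (fun i => a i ⊗ₜ[F] 1) (fun j => b j ⊗ₜ[F] h j)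
    (fun i => tmul_mem_tensSub F (ha i)
      (Submodule.one_le.mp (CliffordAlgebra.one_le_evenOdd_zero _)))
    (fun j => tmul_mem_tensSub F (hb j) (hh j))
  rw [gmlEval_starCoeff_tmul F hc a b (fun _ => Commute.one_left)
    (fun i j _ => ExteriorAlgebra.mul_anticomm_of_mem_evenOdd_one (hh i) (hh j))] at h0
  simp only [List.ofFn_const, List.prod_replicate, one_pow, one_mul] at h0
  exact TensorProduct.eq_zero_of_tmul_eq_zero_left h0 hne

end GrassmannEnvelope

theorem gml_identity_iff_star_identity_grassEnv
    (A : Type*) [Ring A] [Algebra F A] (𝒜 : ZMod 2 → Submodule F A)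
    (r s : ℕ)
    (c : (Fin (r + s) → Bool) → Equiv.Perm (Fin r) → Equiv.Perm (Fin s) → F)
    (hc : ∀ S α σ, c S α σ ≠ 0 → (Finset.univ.filter fun p => S p = true).card = s) :
    (∀ (a : Fin r → A) (b : Fin s → A), (∀ i, a i ∈ 𝒜 0) → (∀ j, b j ∈ 𝒜 1) →
        gmlEval F r s c a b = 0) ↔
      (∀ (x : Fin r → A ⊗[F] Grass F ℕ) (y : Fin s → A ⊗[F] Grass F ℕ),
        (∀ i, x i ∈ tensSub F (𝒜 0) (grassPart F ℕ 0)) →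
        (∀ j, y j ∈ tensSub F (𝒜 1) (grassPart F ℕ 1)) →
        gmlEval F r s (starCoeff F c) x y = 0) :=
  ⟨fun hA _ _ hx hy => gmlEval_starCoeff_eq_zero F hc hA hx hy,
    fun hG _ _ ha hb => gmlEval_eq_zero_of_starCoeff F hc hG ha hb⟩
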